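/- The total number of quasi-shuffles (counted with multiplicity) of a list of length j with a list of length k equals the sum over r from 0 to min(j,k) of (j+k−r)! / (r! · (j−r)! · (k−r)!). -/

import Mathlib

open scoped Nat

/-- The multiset of quasi-shuffles (counted with multiplicity) of two lists over a
type with addition: at each step take the head of the first list, the head of the
second list, or merge (add) the two heads. -/
def qshuffles {A : Type*} [Add A] : List A → List A → Multiset (List A)
  | [], v => {v}
  | a :: u, [] => {a :: u}
  | a :: u, b :: v =>
      ((qshuffles u (b :: v)).map (a :: ·)) + ((qshuffles (a :: u) v).map (b :: ·)) +
        ((qshuffles u v).map ((a + b) :: ·))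
termination_by u v => u.length + v.length

/-! Splitting the quasi-shuffles of `a :: u` and `b :: v` by their first letter gives the Delannoy
recursion `D (j+1) (k+1) = D j (k+1) + D (j+1) k + D j k` with `D 0 k = D j 0 = 1`. The summand
for `r` merged pairs is the trinomial coefficient `C(j+k-r, j) * C(j, r)`; Pascal's rule for both
binomials shows that it satisfies the same recursion termwise, except for the index shift
`r + 1 ↦ r` in the merged term, and summing over `r` gives the recursion for the closed form. -/

open Finset

def delannoy : ℕ → ℕ → ℕ
  | 0, _ => 1
  | _ + 1, 0 => 1
  | j + 1, k + 1 => delannoy j (k + 1) + delannoy (j + 1) k + delannoy j k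

theorem card_qshuffles_eq_delannoy {A : Type*} [Add A] (u v : List A) :
    Multiset.card (qshuffles u v) = delannoy u.length v.length := by
  induction u, v using qshuffles.induct with
  | case1 v => simp [qshuffles, delannoy]
  | case2 a u => simp [qshuffles, delannoy]
  | case3 a u b v ih₁ ih₂ ih₃ =>
    simp only [qshuffles, Multiset.card_add, Multiset.card_map, ih₁, ih₂, ih₃, List.length_cons,
      delannoy]

/-- `(j + k - r)! / (r! * (j - r)! * (k - r)!)`, written as a product of binomial coefficients so
that it is a natural number and vanishes for `r > min j k`. -/
def delannoyTerm (j k r : ℕ) : ℕ := (j + k - r).choose j * j.choose r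

theorem delannoyTerm_eq_zero {j k r : ℕ} (h : min j k < r) : delannoyTerm j k r = 0 := by
  rcases lt_or_ge j r with hj | hj
  · rw [delannoyTerm, Nat.choose_eq_zero_of_lt hj, mul_zero]
  · rw [delannoyTerm, Nat.choose_eq_zero_of_lt (by omega : j + k - r < j), zero_mul]

theorem delannoyTerm_succ_succ_zero (j k : ℕ) :
    delannoyTerm (j + 1) (k + 1) 0 = delannoyTerm j (k + 1) 0 + delannoyTerm (j + 1) k 0 := by
  simp only [delannoyTerm, Nat.sub_zero, Nat.choose_zero_right, mul_one]
  rw [show j + 1 + (k + 1) = j + (k + 1) + 1 by omega, show j + 1 + k = j + (k + 1) by omega,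
    Nat.choose_succ_succ']

theorem delannoyTerm_succ_succ_succ (j k r : ℕ) :
    delannoyTerm (j + 1) (k + 1) (r + 1) =
      delannoyTerm j (k + 1) (r + 1) + delannoyTerm (j + 1) k (r + 1) + delannoyTerm j k r := by
  simp only [delannoyTerm]
  rcases le_or_gt r (j + k) with h | h
  · rw [show j + 1 + (k + 1) - (r + 1) = j + k - r + 1 by omega,
      show j + (k + 1) - (r + 1) = j + k - r by omega,
      show j + 1 + k - (r + 1) = j + k - r by omega,
      Nat.choose_succ_succ' (j + k - r), Nat.choose_succ_succ' j r]
    ring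
  · simp [Nat.choose_eq_zero_of_lt (show j < r by omega),
      Nat.choose_eq_zero_of_lt (show j < r + 1 by omega),
      Nat.choose_eq_zero_of_lt (show j + 1 < r + 1 by omega)]

theorem sum_range_delannoyTerm_of_lt {j k N : ℕ} (h : min j k < N) :
    ∑ r ∈ range N, delannoyTerm j k r = ∑ r ∈ range (min j k + 1), delannoyTerm j k r := by
  refine (sum_subset (range_subset_range.2 h) fun r _ hr => delannoyTerm_eq_zero ?_).symm
  exact Nat.succ_le_iff.mp (not_lt.mp (mem_range.not.mp hr))

theorem delannoy_eq_sum (j k : ℕ) :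
    delannoy j k = ∑ r ∈ range (min j k + 1), delannoyTerm j k r := by
  induction j, k using delannoy.induct with
  | case1 k => simp [delannoy, delannoyTerm]
  | case2 j => simp [delannoy, delannoyTerm]
  | case3 j k ih₁ ih₂ ih₃ =>
    set n := min j k + 1
    rw [delannoy, ih₁, ih₂, ih₃, ← sum_range_delannoyTerm_of_lt (N := n + 1) (by omega),
      ← sum_range_delannoyTerm_of_lt (j := j + 1) (N := n + 1) (by omega),
      show min (j + 1) (k + 1) + 1 = n + 1 by omega]
    simp only [sum_range_succ' _ n, delannoyTerm_succ_succ_succ, sum_add_distrib,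
      delannoyTerm_succ_succ_zero]
    ring

theorem cast_delannoyTerm {j k r : ℕ} (hj : r ≤ j) (hk : r ≤ k) :
    (delannoyTerm j k r : ℚ) = (j + k - r)! / (r ! * (j - r)! * (k - r)!) := by
  rw [delannoyTerm, Nat.cast_mul, Nat.cast_choose ℚ (by omega : j ≤ j + k - r),
    Nat.cast_choose ℚ hj, show j + k - r - j = k - r by omega]
  field_simp

/-- The number of quasi-shuffles, counted with multiplicity, of a list of length `j`
with a list of length `k` equals `∑_{r=0}^{min(j,k)} (j+k−r)!/(r!·(j−r)!·(k−r)!)`. -/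
theorem card_qshuffles {A : Type*} [Add A] (u v : List A) :
    (Multiset.card (qshuffles u v) : ℚ) =
      ∑ r ∈ Finset.range (min u.length v.length + 1),
        ((u.length + v.length - r)! : ℚ) / ((r)! * (u.length - r)! * (v.length - r)!) := by
  rw [card_qshuffles_eq_delannoy, delannoy_eq_sum, Nat.cast_sum]
  refine sum_congr rfl fun r hr => cast_delannoyTerm ?_ ?_ <;>
    simp only [mem_range, Nat.lt_succ_iff, le_min_iff] at hr <;> omega
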